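/- For any finite jobset S' of cardinality t ≥ 1, the set of values {C_2(π) : π a permutation of S'} has cardinality at most t · 2^{t−1}. -/

import Mathlib

/-!
On machine 2 the last job of `π` finishes at the end of a critical path: it leaves machine 1
at some job `j`, having processed the jobs up to and including `j` there, and then stays on
machine 2 from `j` to the end. For a permutation of `S` the length of this path depends only on
`j` and the set `A` of jobs preceding `j`, so `C₂` takes at most as many values as there are
pairs `(j, A)` with `j ∈ S` and `A ⊆ S \ {j}`, namely `t * 2 ^ (t - 1)`.
-/

/-- Machine completion times `(C₁, C₂, C₃)` of a job sequence in a
three-machine flowshop with processing times `p i j`. -/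
def flowComp (p : ℕ → Fin 3 → ℕ) (π : List ℕ) : ℕ × ℕ × ℕ :=
  π.foldl (fun c i =>
    let c1 := c.1 + p i 0
    let c2 := max c.2.1 c1 + p i 1
    let c3 := max c.2.2 c2 + p i 2
    (c1, c2, c3)) (0, 0, 0)

/-- Completion time on machine 2. -/
def C2 (p : ℕ → Fin 3 → ℕ) (π : List ℕ) : ℕ := (flowComp p π).2.1

/-- Completion time on machine 3. -/
def C3 (p : ℕ → Fin 3 → ℕ) (π : List ℕ) : ℕ := (flowComp p π).2.2

/-- `π` is a permutation of the finite jobset `S`: it lists each element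
of `S` exactly once. -/
def IsPermOf (π : List ℕ) (S : Finset ℕ) : Prop :=
  π.Nodup ∧ ∀ x, x ∈ π ↔ x ∈ S

open Finset

namespace Flowshop

variable (p : ℕ → Fin 3 → ℕ)

lemma flowComp_fst (π : List ℕ) : (flowComp p π).1 = (π.map (p · 0)).sum := by
  induction π using List.reverseRecOn with
  | nil => rfl
  | append_singleton π i ih => simp [flowComp, List.foldl_append] at ih ⊢; rw [ih]

lemma C2_append_singleton (π : List ℕ) (i : ℕ) :
    C2 p (π ++ [i]) = max (C2 p π) ((π ++ [i]).map (p · 0)).sum + p i 1 := by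
  rw [List.map_append, List.sum_append, ← flowComp_fst]
  simp [C2, flowComp, List.foldl_append]

lemma exists_C2_eq_criticalPath (π : List ℕ) (hπ : π ≠ []) :
    ∃ a j b, π = a ++ j :: b ∧
      C2 p π = ((a ++ [j]).map (p · 0)).sum + ((j :: b).map (p · 1)).sum := by
  induction π using List.reverseRecOn with
  | nil => exact absurd rfl hπ
  | append_singleton π i ih =>
    rw [C2_append_singleton]
    rcases eq_or_ne π [] with rfl | hne
    · exact ⟨[], i, [], rfl, by simp [C2, flowComp]⟩
    rcases le_total ((π ++ [i]).map (p · 0)).sum (C2 p π) with hle | hle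
    · obtain ⟨a, j, b, rfl, hval⟩ := ih hne
      refine ⟨a, j, b ++ [i], by simp, ?_⟩
      rw [max_eq_left hle, hval]
      simp [add_assoc]
    · exact ⟨π, i, [], rfl, by rw [max_eq_right hle]; simp⟩

def criticalPath (S : Finset ℕ) (j : ℕ) (A : Finset ℕ) : ℕ :=
  ∑ x ∈ insert j A, p x 0 + ∑ x ∈ S \ A, p x 1

lemma C2_mem_image_criticalPath {π : List ℕ} {S : Finset ℕ} (hπ : IsPermOf π S)
    (hS : S.Nonempty) :
    C2 p π ∈ (S.sigma fun j => (S.erase j).powerset).image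
      fun q => criticalPath p S q.1 q.2 := by
  obtain rfl : π.toFinset = S := by ext x; simp [hπ.2 x]
  have hne : π ≠ [] := by rintro rfl; simp at hS
  obtain ⟨a, j, b, rfl, hval⟩ := exists_C2_eq_criticalPath p π hne
  obtain ⟨ha, hjb, hdisj⟩ := List.nodup_append.mp hπ.1
  have hja : j ∉ a := fun h => hdisj j h j List.mem_cons_self rfl
  have hsdiff : (a ++ j :: b).toFinset \ a.toFinset = (j :: b).toFinset := by
    rw [List.toFinset_append, union_sdiff_cancel_left]
    exact List.disjoint_toFinset_iff_disjoint.mpr fun x hxa hxb => hdisj x hxa x hxb rfl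
  refine mem_image.mpr ⟨⟨j, a.toFinset⟩, mem_sigma.mpr ⟨by simp, ?_⟩, ?_⟩
  · refine mem_powerset.mpr fun x hx => ?_
    simp only [List.mem_toFinset] at hx
    simp [hx, ne_of_mem_of_not_mem hx hja]
  · rw [hval, criticalPath, hsdiff, sum_insert (by simpa using hja), List.sum_toFinset _ ha,
      List.sum_toFinset _ hjb, List.map_append, List.sum_append]
    simp [add_comm]

lemma card_sigma_erase_powerset (S : Finset ℕ) :
    #(S.sigma fun j => (S.erase j).powerset) = #S * 2 ^ (#S - 1) := by
  rw [card_sigma, sum_congr rfl fun j hj => by rw [card_powerset, card_erase_of_mem hj],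
    sum_const, smul_eq_mul]

end Flowshop

open Flowshop in
theorem stmt_3 (p : ℕ → Fin 3 → ℕ) (S' : Finset ℕ) (t : ℕ) (ht : 1 ≤ t)
    (hcard : S'.card = t) :
    {v : ℕ | ∃ π : List ℕ, IsPermOf π S' ∧ C2 p π = v}.ncard ≤ t * 2 ^ (t - 1) := by
  have hS : S'.Nonempty := card_pos.mp (hcard ▸ ht)
  have hsub : {v : ℕ | ∃ π : List ℕ, IsPermOf π S' ∧ C2 p π = v} ⊆
      ((S'.sigma fun j => (S'.erase j).powerset).image fun q => criticalPath p S' q.1 q.2) := by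
    rintro _ ⟨π, hπ, rfl⟩
    exact C2_mem_image_criticalPath p hπ hS
  calc {v : ℕ | ∃ π : List ℕ, IsPermOf π S' ∧ C2 p π = v}.ncard
      ≤ #((S'.sigma fun j => (S'.erase j).powerset).image fun q => criticalPath p S' q.1 q.2) :=
        (Set.ncard_le_ncard hsub (finite_toSet _)).trans_eq (Set.ncard_coe_finset _)
    _ ≤ #(S'.sigma fun j => (S'.erase j).powerset) := card_image_le
    _ = t * 2 ^ (t - 1) := by rw [card_sigma_erase_powerset, hcard]
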